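/- arXiv:1905.04360 — 3 statements merged into one kernel-verified Lean document; each statement's English description precedes it below -/
import Mathlib

section
/- Fix p ∈ (0,1) and k ∈ ℕ. Let S be an n×n symmetric conference matrix, let X ∼ Sub(S,p), let N denote the (random) number of rows of X, and put Z := (1/(p√n)) X. Define V := (1/(pn)) tr(Z^k) and W := ∫_ℝ x^k dμ_Z(x) = (1/N) tr(Z^k) (with W := 0 when N = 0). Then there exists a constant c(p,k) > 0, depending only on p and k, such that |E V − E W| ≤ c(p,k)/√n and |Var(V) − Var(W)| ≤ c(p,k)/√n. -/
open MeasureTheory ProbabilityTheory Filter Finset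
open scoped ENNReal

/-- An `n × n` symmetric conference matrix: symmetric, zero diagonal,
`±1` off the diagonal, and `Sᵀ S = (n-1) I`. -/
def IsConferenceMatrix {n : ℕ} (S : Matrix (Fin n) (Fin n) ℝ) : Prop :=
  S.IsSymm ∧ (∀ i, S i i = 0) ∧ (∀ i j, i ≠ j → S i j = 1 ∨ S i j = -1) ∧
    S.transpose * S = ((n : ℝ) - 1) • 1

/-- The product of `n` independent `Bernoulli(p)` coins: the law of the random
index set `𝓘 ⊆ [n]` in which each element is included independently with probability `p`. -/
noncomputable def bernoulliPi (n : ℕ) (p : ℝ≥0∞) (hp : p ≤ 1) :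
    Measure (Fin n → Bool) :=
  Measure.pi fun _ => (PMF.bernoulli p.toNNReal
    (by simpa using ENNReal.toNNReal_mono ENNReal.one_ne_top hp)).toMeasure

/-- The principal submatrix of `S` with rows and columns indexed by `{i | ω i = true}`. -/
def subMat {n : ℕ} (S : Matrix (Fin n) (Fin n) ℝ) (ω : Fin n → Bool) :
    Matrix {i : Fin n // ω i = true} {i : Fin n // ω i = true} ℝ :=
  S.submatrix Subtype.val Subtype.val

open scoped NNReal Matrix

/-!
Every eigenvalue `λ` of a principal submatrix `A` of `S` satisfies `λ² ≤ n - 1`: for a unit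
eigenvector `v`, extended by zero, `λ² = ‖A v‖² ≤ ‖S v‖² = vᵀ Sᵀ S v = n - 1`. Hence `|tr (Z ^ k)| ≤ N / p ^ k`, so
that `V` and `W` are bounded by `p ^ -(k+1)` and `|V - W| ≤ |N - p n| / (p ^ (k+1) n)`. Since
`N` is binomial, `E |N - p n| ≤ √(Var N) ≤ √n`, which controls the difference of the means
directly, and that of the variances through `a² - b² = (a - b) (a + b)`.
-/

namespace Matrix

variable {n : Type*} [Fintype n] [DecidableEq n]

theorem IsHermitian.trace_pow_eq_sum_eigenvalues_pow {𝕜 : Type*} [RCLike 𝕜]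
    {A : Matrix n n 𝕜} (hA : A.IsHermitian) (k : ℕ) :
    (A ^ k).trace = ∑ i, (hA.eigenvalues i : 𝕜) ^ k := by
  rw [← cfc_pow_id (R := ℝ) A k hA.isSelfAdjoint, hA.cfc_eq, IsHermitian.cfc,
    Unitary.conjStarAlgAut_apply, trace_mul_cycle, Unitary.coe_star_mul_self, one_mul,
    trace_diagonal]
  simp

theorem IsHermitian.sq_eigenvalues_le {A : Matrix n n ℝ} (hA : A.IsHermitian) {c : ℝ}
    (hc : ∀ v, A *ᵥ v ⬝ᵥ A *ᵥ v ≤ c * (v ⬝ᵥ v)) (i : n) : hA.eigenvalues i ^ 2 ≤ c := by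
  have hunit : ⇑(hA.eigenvectorBasis i) ⬝ᵥ ⇑(hA.eigenvectorBasis i) = 1 := by
    have := real_inner_self_eq_norm_sq (hA.eigenvectorBasis i)
    rw [hA.eigenvectorBasis.orthonormal.1 i, EuclideanSpace.inner_eq_star_dotProduct] at this
    simpa using this
  simpa [hA.mulVec_eigenvectorBasis, hunit, sq] using hc (hA.eigenvectorBasis i)

theorem dotProduct_mulVec_submatrix_le {S : Matrix n n ℝ} {c : ℝ} (hS : Sᵀ * S = c • 1)
    (P : n → Prop) [DecidablePred P] (v : {i // P i} → ℝ) :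
    S.submatrix (Subtype.val (p := P)) Subtype.val *ᵥ v ⬝ᵥ
      S.submatrix (Subtype.val (p := P)) Subtype.val *ᵥ v ≤ c * (v ⬝ᵥ v) := by
  set w : n → ℝ := fun j => if h : P j then v ⟨j, h⟩ else 0
  have hw_in (a : {i // P i}) : w a = v a := dif_pos a.2
  have hw_out (a : {i // ¬P i}) : w a = 0 := dif_neg a.2
  have hw (f : n → ℝ) : ∑ j, f j * w j = ∑ a : {i // P i}, f a * v a := by
    simp [← Fintype.sum_subtype_add_sum_subtype P, hw_in, hw_out]
  have hSw (a : {i // P i}) : (S.submatrix Subtype.val Subtype.val *ᵥ v) a = (S *ᵥ w) a := by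
    simp [mulVec, dotProduct, hw]
  calc S.submatrix Subtype.val Subtype.val *ᵥ v ⬝ᵥ S.submatrix Subtype.val Subtype.val *ᵥ v
      = ∑ a : {i // P i}, (S *ᵥ w) a * (S *ᵥ w) a := by simp only [dotProduct, hSw]
    _ ≤ S *ᵥ w ⬝ᵥ S *ᵥ w := by
      rw [dotProduct, ← Fintype.sum_subtype_add_sum_subtype P]
      exact le_add_of_nonneg_right (sum_nonneg fun _ _ => mul_self_nonneg _)
    _ = c * (w ⬝ᵥ w) := by
      rw [dotProduct_mulVec, vecMul_mulVec, ← mulVec_transpose, hS]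
      simp [smul_mulVec]
    _ = c * (v ⬝ᵥ v) := by simp only [dotProduct, hw, hw_in]

theorem abs_trace_pow_submatrix_le {S : Matrix n n ℝ} (hSym : S.IsSymm) {c : ℝ}
    (hS : Sᵀ * S = c • 1) (P : n → Prop) [DecidablePred P] (k : ℕ) :
    |(S.submatrix (Subtype.val (p := P)) Subtype.val ^ k).trace| ≤
      Fintype.card {i // P i} * √c ^ k := by
  have hA : (S.submatrix (Subtype.val (p := P)) Subtype.val).IsHermitian := by
    rw [IsHermitian, conjTranspose_eq_transpose_of_trivial]
    exact hSym.submatrix _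
  have heig (i : {i // P i}) : |hA.eigenvalues i| ≤ √c :=
    Real.abs_le_sqrt (hA.sq_eigenvalues_le (dotProduct_mulVec_submatrix_le hS P) i)
  rw [hA.trace_pow_eq_sum_eigenvalues_pow]
  calc |∑ i, (hA.eigenvalues i : ℝ) ^ k| ≤ ∑ i, |hA.eigenvalues i| ^ k :=
        (abs_sum_le_sum_abs _ _).trans_eq (by simp only [abs_pow])
    _ ≤ ∑ _i : {i // P i}, √c ^ k :=
        sum_le_sum fun i _ => pow_le_pow_left₀ (abs_nonneg _) (heig i) k
    _ = Fintype.card {i // P i} * √c ^ k := by simp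

end Matrix

theorem IsConferenceMatrix.abs_trace_pow_subMat_le {n : ℕ} {S : Matrix (Fin n) (Fin n) ℝ}
    (hS : IsConferenceMatrix S) (ω : Fin n → Bool) (k : ℕ) :
    |(subMat S ω ^ k).trace| ≤ Fintype.card {i // ω i = true} * √n ^ k := by
  obtain ⟨hSym, -, -, hSS⟩ := hS
  refine (Matrix.abs_trace_pow_submatrix_le hSym hSS _ k).trans ?_
  gcongr
  linarith

theorem IsConferenceMatrix.abs_trace_pow_smul_subMat_le {n : ℕ} {S : Matrix (Fin n) (Fin n) ℝ}
    (hS : IsConferenceMatrix S) {t : ℝ} (ht : 0 ≤ t) (ω : Fin n → Bool) (k : ℕ) :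
    |((t • subMat S ω) ^ k).trace| ≤ Fintype.card {i // ω i = true} * (t * √n) ^ k := by
  rw [smul_pow, Matrix.trace_smul, smul_eq_mul, abs_mul, abs_of_nonneg (by positivity)]
  calc t ^ k * |(subMat S ω ^ k).trace|
      ≤ t ^ k * (Fintype.card {i // ω i = true} * √n ^ k) := by
        gcongr; exact hS.abs_trace_pow_subMat_le ω k
    _ = Fintype.card {i // ω i = true} * (t * √n) ^ k := by ring

theorem abs_inv_mul_le_of_abs_le_mul {N T a : ℝ} (ha : 0 ≤ a) (hT : |T| ≤ N * a) :
    |N⁻¹ * T| ≤ a := by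
  rcases eq_or_ne N 0 with rfl | hN
  · simpa using ha
  rw [abs_mul, abs_inv, inv_mul_le_iff₀ (abs_pos.2 hN)]
  exact hT.trans (mul_le_mul_of_nonneg_right (le_abs_self N) ha)

theorem abs_one_div_mul_sub_inv_mul_le {N T m a : ℝ} (ha : 0 ≤ a) (hm : 0 < m) (hN : 0 ≤ N)
    (hT : |T| ≤ N * a) : |1 / m * T - N⁻¹ * T| ≤ a * |N - m| / m := by
  rcases hN.eq_or_lt with rfl | hN
  · obtain rfl : T = 0 := abs_nonpos_iff.1 (by simpa using hT)
    simp only [mul_zero, sub_zero, abs_zero]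
    positivity
  rw [show 1 / m * T - N⁻¹ * T = T * (N - m) / (m * N) by field_simp, abs_div, abs_mul,
    abs_of_pos (by positivity : 0 < m * N), div_le_div_iff₀ (by positivity) hm]
  calc |T| * |N - m| * m ≤ N * a * |N - m| * m := by gcongr
    _ = a * |N - m| * (m * N) := by ring

theorem abs_sq_sub_sq_le {a b M : ℝ} (ha : |a| ≤ M) (hb : |b| ≤ M) :
    |a ^ 2 - b ^ 2| ≤ 2 * M * |a - b| := by
  rw [show a ^ 2 - b ^ 2 = (a + b) * (a - b) by ring, abs_mul]
  gcongr
  linarith [abs_add_le a b]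

section Moments

variable {Ω : Type*} [MeasurableSpace Ω] {μ : Measure Ω}

theorem integral_abs_sub_integral_le_sqrt_variance [IsProbabilityMeasure μ] {X : Ω → ℝ}
    (hX : MemLp X 2 μ) : ∫ ω, |X ω - μ[X]| ∂μ ≤ √(Var[X; μ]) := by
  have hY : MemLp (fun ω => |X ω - μ[X]|) 2 μ := (hX.sub (memLp_const _)).abs
  have h := variance_nonneg (fun ω => |X ω - μ[X]|) μ
  rw [variance_eq_sub hY] at h
  refine Real.le_sqrt_of_sq_le ?_
  rw [variance_eq_integral hX.aestronglyMeasurable.aemeasurable]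
  simpa [sq_abs] using h

variable [Finite Ω] [MeasurableSingletonClass Ω] [IsProbabilityMeasure μ] {V W g : Ω → ℝ}

theorem abs_integral_sub_integral_le (hVW : ∀ ω, |V ω - W ω| ≤ g ω) :
    |∫ ω, V ω ∂μ - ∫ ω, W ω ∂μ| ≤ ∫ ω, g ω ∂μ := by
  rw [← integral_sub .of_finite .of_finite]
  exact abs_integral_le_integral_abs.trans (integral_mono .of_finite .of_finite hVW)

theorem abs_variance_sub_variance_le {M : ℝ} (hV : ∀ ω, |V ω| ≤ M) (hW : ∀ ω, |W ω| ≤ M)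
    (hVW : ∀ ω, |V ω - W ω| ≤ g ω) :
    |Var[V; μ] - Var[W; μ]| ≤ 4 * M * ∫ ω, g ω ∂μ := by
  have hmean (X : Ω → ℝ) (hX : ∀ ω, |X ω| ≤ M) : |∫ ω, X ω ∂μ| ≤ M := by
    simpa using norm_integral_le_of_norm_le_const (μ := μ) (ae_of_all _ hX : ∀ᵐ ω ∂μ, ‖X ω‖ ≤ M)
  have hM : 0 ≤ M := (abs_nonneg _).trans (hmean V hV)
  have hsq : |∫ ω, V ω ^ 2 ∂μ - ∫ ω, W ω ^ 2 ∂μ| ≤ 2 * M * ∫ ω, g ω ∂μ := by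
    rw [← integral_const_mul]
    exact abs_integral_sub_integral_le fun ω =>
      (abs_sq_sub_sq_le (hV ω) (hW ω)).trans (by gcongr; exact hVW ω)
  have hsq_mean : |(∫ ω, V ω ∂μ) ^ 2 - (∫ ω, W ω ∂μ) ^ 2| ≤ 2 * M * ∫ ω, g ω ∂μ :=
    (abs_sq_sub_sq_le (hmean V hV) (hmean W hW)).trans
      (by gcongr; exact abs_integral_sub_integral_le hVW)
  rw [variance_eq_sub MemLp.of_discrete, variance_eq_sub MemLp.of_discrete]
  simp only [Pi.pow_apply]
  calc _ = |(∫ ω, V ω ^ 2 ∂μ - ∫ ω, W ω ^ 2 ∂μ) - ((∫ ω, V ω ∂μ) ^ 2 - (∫ ω, W ω ∂μ) ^ 2)| := by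
        ring_nf
    _ ≤ _ := (abs_sub _ _).trans (by linarith)

section RatioEstimator

variable {T N : Ω → ℝ} {a : ℝ}

theorem abs_integral_one_div_mul_sub_integral_inv_mul_le {m : ℝ} (hm : 0 < m) (ha : 0 ≤ a)
    (hN : ∀ ω, 0 ≤ N ω) (hT : ∀ ω, |T ω| ≤ N ω * a) :
    |∫ ω, 1 / m * T ω ∂μ - ∫ ω, (N ω)⁻¹ * T ω ∂μ| ≤ a / m * ∫ ω, |N ω - m| ∂μ := by
  refine (abs_integral_sub_integral_le fun ω =>
    abs_one_div_mul_sub_inv_mul_le ha hm (hN ω) (hT ω)).trans_eq ?_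
  rw [integral_div, integral_const_mul]
  ring

theorem abs_variance_one_div_mul_sub_variance_inv_mul_le {p n : ℝ} (hp0 : 0 < p) (hp1 : p ≤ 1)
    (hn : 0 < n) (ha : 0 ≤ a) (hN : ∀ ω, 0 ≤ N ω ∧ N ω ≤ n) (hT : ∀ ω, |T ω| ≤ N ω * a) :
    |Var[fun ω => 1 / (p * n) * T ω; μ] - Var[fun ω => (N ω)⁻¹ * T ω; μ]| ≤
      4 * (a / p) * (a / (p * n) * ∫ ω, |N ω - p * n| ∂μ) := by
  have hV (ω : Ω) : |1 / (p * n) * T ω| ≤ a / p := by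
    rw [one_div]
    refine abs_inv_mul_le_of_abs_le_mul (by positivity) ((hT ω).trans ?_)
    calc N ω * a ≤ n * a := by gcongr; exact (hN ω).2
      _ = p * n * (a / p) := by field_simp
  have hW (ω : Ω) : |(N ω)⁻¹ * T ω| ≤ a / p :=
    (abs_inv_mul_le_of_abs_le_mul ha (hT ω)).trans (le_div_self ha hp0 hp1)
  refine (abs_variance_sub_variance_le hV hW fun ω =>
    abs_one_div_mul_sub_inv_mul_le ha (by positivity) (hN ω).1 (hT ω)).trans_eq ?_
  rw [integral_div, integral_const_mul]
  ring

end RatioEstimator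

end Moments

section Bernoulli

set_option linter.deprecated false

theorem PMF.integral_bernoulli {q : ℝ≥0} (hq : q ≤ 1) (f : Bool → ℝ) :
    ∫ b, f b ∂(PMF.bernoulli q hq).toMeasure = q * f true + (1 - q) * f false := by
  simp [PMF.integral_eq_sum, PMF.bernoulli_apply, NNReal.coe_sub hq]

theorem PMF.variance_toNat_bernoulli {q : ℝ≥0} (hq : q ≤ 1) :
    Var[fun b : Bool => (b.toNat : ℝ); (PMF.bernoulli q hq).toMeasure] = q * (1 - q) := by
  rw [variance_eq_integral (measurable_of_countable _).aemeasurable, PMF.integral_bernoulli,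
    PMF.integral_bernoulli]
  simp only [Bool.toNat_true, Bool.toNat_false, Nat.cast_one, Nat.cast_zero, mul_one, mul_zero,
    add_zero, zero_sub, neg_sq]
  ring

variable {n : ℕ} {p : ℝ≥0∞} {hp : p ≤ 1}

theorem bernoulliPi_eq_pi (hp' : p.toNNReal ≤ 1) :
    bernoulliPi n p hp = Measure.pi fun _ => (PMF.bernoulli p.toNNReal hp').toMeasure := rfl

instance isProbabilityMeasure_bernoulliPi : IsProbabilityMeasure (bernoulliPi n p hp) := by
  unfold bernoulliPi; infer_instance

theorem card_true_eq_sum_toNat (ω : Fin n → Bool) :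
    (Fintype.card {i // ω i = true} : ℝ) = ∑ i, ((ω i).toNat : ℝ) := by
  simp only [Fintype.card_subtype, Finset.card_filter]
  push_cast
  congr! 2 with i
  cases ω i <;> simp

theorem integral_card_true_bernoulliPi :
    ∫ ω, (Fintype.card {i // ω i = true} : ℝ) ∂bernoulliPi n p hp = n * p.toReal := by
  have hp' : p.toNNReal ≤ 1 := by simpa using ENNReal.toNNReal_mono ENNReal.one_ne_top hp
  have hcoord (i : Fin n) : ∫ ω, ((ω i).toNat : ℝ) ∂bernoulliPi n p hp = p.toReal := by
    rw [bernoulliPi_eq_pi hp', integral_comp_eval (X := fun _ => Bool)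
      (f := fun b => (b.toNat : ℝ)) (measurable_of_countable _).aestronglyMeasurable,
      PMF.integral_bernoulli]
    simp [ENNReal.coe_toNNReal_eq_toReal]
  simp_rw [card_true_eq_sum_toNat]
  rw [integral_finset_sum _ fun i _ => Integrable.of_finite]
  simp [hcoord]

theorem variance_card_true_bernoulliPi :
    Var[fun ω => (Fintype.card {i // ω i = true} : ℝ); bernoulliPi n p hp] =
      n * (p.toReal * (1 - p.toReal)) := by
  have hp' : p.toNNReal ≤ 1 := by simpa using ENNReal.toNNReal_mono ENNReal.one_ne_top hp
  have hsum : (fun ω : Fin n → Bool => (Fintype.card {i // ω i = true} : ℝ)) =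
      ∑ i, fun ω => ((ω i).toNat : ℝ) := by
    ext ω; simp [card_true_eq_sum_toNat]
  rw [hsum, bernoulliPi_eq_pi hp', variance_sum_pi (X := fun _ b => (b.toNat : ℝ))
    (μ := fun _ => (PMF.bernoulli p.toNNReal hp').toMeasure) fun _ => MemLp.of_discrete]
  simp [PMF.variance_toNat_bernoulli, ENNReal.coe_toNNReal_eq_toReal]

theorem integral_abs_card_true_sub_le :
    ∫ ω, |(Fintype.card {i // ω i = true} : ℝ) - n * p.toReal| ∂bernoulliPi n p hp ≤ √n := by
  have h := integral_abs_sub_integral_le_sqrt_variance (μ := bernoulliPi n p hp)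
    (X := fun ω => (Fintype.card {i // ω i = true} : ℝ)) MemLp.of_discrete
  rw [integral_card_true_bernoulliPi, variance_card_true_bernoulliPi] at h
  refine h.trans (Real.sqrt_le_sqrt ?_)
  have hp1 : p.toReal ≤ 1 := by simpa using ENNReal.toReal_mono ENNReal.one_ne_top hp
  have hp0 : 0 ≤ p.toReal := ENNReal.toReal_nonneg
  have hvar : p.toReal * (1 - p.toReal) ≤ 1 := by nlinarith
  simpa using mul_le_mul_of_nonneg_left hvar (Nat.cast_nonneg (α := ℝ) n)

end Bernoulli

theorem stmt3_general (p : ℝ) (hp0 : 0 < p) (hp1 : p < 1) (k : ℕ) :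
    ∃ c > (0 : ℝ), ∀ (n : ℕ) (S : Matrix (Fin n) (Fin n) ℝ),
      IsConferenceMatrix S →
      let μ := bernoulliPi n (ENNReal.ofReal p) (ENNReal.ofReal_le_one.mpr hp1.le)
      let V := fun ω : Fin n → Bool =>
        (1 / (p * n)) * Matrix.trace (((1 / (p * Real.sqrt n)) • subMat S ω) ^ k)
      let W := fun ω : Fin n → Bool =>
        ((Fintype.card {i : Fin n // ω i = true} : ℝ))⁻¹ *
          Matrix.trace (((1 / (p * Real.sqrt n)) • subMat S ω) ^ k)
      |(∫ ω, V ω ∂μ) - ∫ ω, W ω ∂μ| ≤ c / Real.sqrt n ∧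
      |variance V μ - variance W μ| ≤ c / Real.sqrt n := by
  set a : ℝ := (p ^ k)⁻¹
  refine ⟨4 * (a / p) ^ 2, by positivity, fun n S hS => ?_⟩
  intro μ V W
  rcases n.eq_zero_or_pos with rfl | hn
  · -- the index type is empty, so `V = W = 0`, matching the junk value `c / √0 = 0`
    simp [V, W]
  set N : (Fin n → Bool) → ℝ := fun ω => Fintype.card {i // ω i = true}
  have hnpos : (0 : ℝ) < n := by exact_mod_cast hn
  have hN (ω : Fin n → Bool) : 0 ≤ N ω ∧ N ω ≤ n :=
    ⟨by positivity, by simpa [N] using Fintype.card_subtype_le (fun i : Fin n => ω i = true)⟩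
  have hT (ω : Fin n → Bool) : |(((1 / (p * √n)) • subMat S ω) ^ k).trace| ≤ N ω * a :=
    (hS.abs_trace_pow_smul_subMat_le (by positivity) ω k).trans_eq <| by
      rw [show 1 / (p * √n) * √n = p⁻¹ by field_simp, inv_pow]
  have hdev : a / (p * n) * ∫ ω, |N ω - p * n| ∂μ ≤ a / p / √n := by
    have h := integral_abs_card_true_sub_le (n := n) (hp := ENNReal.ofReal_le_one.mpr hp1.le)
    rw [ENNReal.toReal_ofReal hp0.le, mul_comm (n : ℝ) p] at h
    calc a / (p * n) * ∫ ω, |N ω - p * n| ∂μ ≤ a / (p * n) * √n := by gcongr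
      _ = a / p / √n := by
        field_simp
        rw [Real.sq_sqrt hnpos.le]
  have hap : 1 ≤ a / p := by
    rw [le_div_iff₀ hp0, one_mul]
    exact hp1.le.trans (one_le_inv₀ (by positivity) |>.2 (pow_le_one₀ hp0.le hp1.le))
  refine ⟨(abs_integral_one_div_mul_sub_integral_inv_mul_le (by positivity) (by positivity)
      (fun ω => (hN ω).1) hT).trans (hdev.trans ?_),
    (abs_variance_one_div_mul_sub_variance_inv_mul_le hp0 hp1.le hnpos (by positivity) hN
      hT).trans ?_⟩
  · gcongr
    nlinarith
  · exact (mul_le_mul_of_nonneg_left hdev (by positivity)).trans_eq (by ring)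

/-- `V := (1/(pn)) tr(Z^k)` is a good proxy for the `k`-th moment
`W := (1/N) tr(Z^k)` of the empirical spectral distribution of `Z = (1/(p√n)) X`:
both the expectations and the variances differ by at most `c(p,k)/√n`. -/
theorem stmt3 (p : ℝ) (hp0 : 0 < p) (hp1 : p < 1) (k : ℕ) (hk : 0 < k) :
    ∃ c > (0 : ℝ), ∀ (n : ℕ) (S : Matrix (Fin n) (Fin n) ℝ),
      IsConferenceMatrix S →
      let μ := bernoulliPi n (ENNReal.ofReal p) (ENNReal.ofReal_le_one.mpr hp1.le)
      let V := fun ω : Fin n → Bool =>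
        (1 / (p * n)) * Matrix.trace (((1 / (p * Real.sqrt n)) • subMat S ω) ^ k)
      let W := fun ω : Fin n → Bool =>
        ((Fintype.card {i : Fin n // ω i = true} : ℝ))⁻¹ *
          Matrix.trace (((1 / (p * Real.sqrt n)) • subMat S ω) ^ k)
      |(∫ ω, V ω ∂μ) - ∫ ω, W ω ∂μ| ≤ c / Real.sqrt n ∧
      |variance V μ - variance W μ| ≤ c / Real.sqrt n :=
  stmt3_general p hp0 hp1 k
end

section
/- For every v ≥ 2 and every k ∈ ℕ, the k-th moment of the Kesten–McKay distribution with parameter v satisfies: ∫_ℝ x^k dμ_{KM(v)}(x) = Σ_{j=1}^{k/2} C(k/2 − 1, k/2 − j) v^j (v−1)^{k/2 − j} if k is even, and ∫_ℝ x^k dμ_{KM(v)}(x) = 0 if k is odd. -/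
open MeasureTheory Filter
open scoped ENNReal

/-- The Kesten–McKay distribution with parameter `v`. -/
noncomputable def kestenMcKay (v : ℝ) : Measure ℝ :=
  volume.withDensity fun x =>
    ENNReal.ofReal (if x ^ 2 ≤ 4 * (v - 1) then
      v * Real.sqrt (4 * (v - 1) - x ^ 2) / (2 * Real.pi * (v ^ 2 - x ^ 2)) else 0)

/-- Catalan's triangle `C(n,k) = (n+k)! (n-k+1) / (k! (n+1)!)`. -/
noncomputable def catalanTriangle (n k : ℕ) : ℝ :=
  (Nat.factorial (n + k) * (n - k + 1) : ℝ) / (Nat.factorial k * Nat.factorial (n + 1))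

open Real intervalIntegral

/-!
On its support `[-r, r]`, `r = 2√(v - 1)`, the Kesten–McKay density is
`v / (2π) · √(r² - x²) / (v² - x²)`. Multiplying by `v² - x²` gives the semicircle weight, whose
even moments are `2π · Catalan(n) · (r / 2)^(2n + 2)` (integration by parts). Hence the even
moments satisfy `M (n + 1) = v² M n - v · Catalan(n) · (v - 1)^(n + 1)`, with `M 0 = 1` computed
from an explicit arcsine primitive. Read as binary forms in `v` and `w = v - 1`, the rows of
Catalan's triangle satisfy `(v - w) R (n + 1) = v² R n - Catalan(n + 1) w^(n + 2)`, a consequence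
of the rule `C(n + 1, k + 1) = C(n + 1, k) + C(n, k + 1)`; so `M (n + 1) = v · R n`.
Odd moments vanish by symmetry.
-/

section CatalanTriangle

open Finset Finset.Nat
open scoped Nat

lemma catalanTriangle_zero_right (n : ℕ) : catalanTriangle n 0 = 1 := by
  simp only [catalanTriangle, add_zero, Nat.factorial_zero, Nat.factorial_succ,
    Nat.cast_mul, Nat.cast_succ, CharP.cast_eq_zero, sub_zero]
  have := Nat.factorial_pos n
  field_simp
  ring

lemma catalanTriangle_succ_right_self (n : ℕ) : catalanTriangle n (n + 1) = 0 := by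
  simp [catalanTriangle]

lemma catalanTriangle_succ_succ (n k : ℕ) :
    catalanTriangle (n + 1) (k + 1) = catalanTriangle (n + 1) k + catalanTriangle n (k + 1) := by
  simp only [catalanTriangle, show n + 1 + (k + 1) = n + (k + 1) + 1 by ring,
    show n + 1 + k = n + (k + 1) by ring, Nat.factorial_succ (n + (k + 1)), Nat.factorial_succ k,
    Nat.factorial_succ (n + 1)]
  have := Nat.factorial_pos (n + (k + 1))
  have := Nat.factorial_pos k
  have := Nat.factorial_pos (n + 1)
  push_cast
  field_simp
  ring

lemma catalanTriangle_self (n : ℕ) : catalanTriangle n n = catalan n := by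
  have h : ((n + 1 : ℕ) : ℝ) * catalan n = (2 * n)! / (n ! * n !) := by
    rw [← Nat.cast_mul, succ_mul_catalan_eq_centralBinom, Nat.centralBinom_eq_two_mul_choose,
      Nat.cast_choose ℝ (by omega : n ≤ 2 * n), show 2 * n - n = n by omega]
  have := Nat.factorial_pos n
  rw [eq_div_iff (by positivity)] at h
  simp only [catalanTriangle, ← two_mul, sub_self, zero_add, mul_one, Nat.factorial_succ]
  push_cast at h ⊢
  field_simp
  linear_combination -h

lemma succ_succ_mul_catalan_succ (n : ℕ) :
    (n + 2) * catalan (n + 1) = 2 * (2 * n + 1) * catalan n := by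
  apply Nat.eq_of_mul_eq_mul_left n.succ_pos
  calc (n + 1) * ((n + 2) * catalan (n + 1)) = (n + 1) * (n + 1).centralBinom := by
        rw [← succ_mul_catalan_eq_centralBinom]
    _ = 2 * (2 * n + 1) * n.centralBinom := Nat.succ_mul_centralBinom_succ n
    _ = (n + 1) * (2 * (2 * n + 1) * catalan n) := by
        rw [← succ_mul_catalan_eq_centralBinom]; ring

noncomputable def binaryForm (c : ℕ → ℝ) (n : ℕ) (v w : ℝ) : ℝ :=
  ∑ p ∈ antidiagonal n, c p.2 * v ^ p.1 * w ^ p.2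

lemma binaryForm_succ (c : ℕ → ℝ) (n : ℕ) (v w : ℝ) :
    binaryForm c (n + 1) v w = c (n + 1) * w ^ (n + 1) + v * binaryForm c n v w := by
  simp only [binaryForm, sum_antidiagonal_succ, mul_sum, pow_succ]
  congr 1
  · ring
  · exact sum_congr rfl fun _ _ => by ring

lemma binaryForm_succ' (c : ℕ → ℝ) (n : ℕ) (v w : ℝ) :
    binaryForm c (n + 1) v w = c 0 * v ^ (n + 1) + w * binaryForm (fun j => c (j + 1)) n v w := by
  simp only [binaryForm, sum_antidiagonal_succ', mul_sum]
  congr 1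
  · ring
  · exact sum_congr rfl fun _ _ => by ring

lemma binaryForm_add (c d : ℕ → ℝ) (n : ℕ) (v w : ℝ) :
    binaryForm (fun j => c j + d j) n v w = binaryForm c n v w + binaryForm d n v w := by
  simp only [binaryForm, ← sum_add_distrib, add_mul]

lemma sub_mul_binaryForm_catalanTriangle_succ (n : ℕ) (v w : ℝ) :
    (v - w) * binaryForm (catalanTriangle (n + 1)) (n + 1) v w =
      v ^ 2 * binaryForm (catalanTriangle n) n v w - catalan (n + 1) * w ^ (n + 2) := by
  have hA := binaryForm_succ (catalanTriangle (n + 1)) n v w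
  have hB := binaryForm_succ' (catalanTriangle (n + 1)) n v w
  have hC := (binaryForm_succ (catalanTriangle n) n v w).symm.trans
    (binaryForm_succ' (catalanTriangle n) n v w)
  simp only [catalanTriangle_succ_succ, binaryForm_add] at hB
  rw [catalanTriangle_self] at hA
  rw [catalanTriangle_succ_right_self] at hC
  simp only [catalanTriangle_zero_right] at hB hC
  linear_combination v * hB - w * hA - v * hC

lemma mul_binaryForm_eq_sum_Icc (c : ℕ → ℝ) (n : ℕ) (v w : ℝ) :
    v * binaryForm c n v w = ∑ j ∈ Icc 1 (n + 1), c (n + 1 - j) * v ^ j * w ^ (n + 1 - j) := by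
  rw [binaryForm, sum_antidiagonal_eq_sum_range_succ_mk, mul_sum, ← Ico_add_one_right_eq_Icc,
    sum_Ico_eq_sum_range, Nat.add_sub_cancel]
  refine sum_congr rfl fun i _ => ?_
  rw [show n + 1 - (1 + i) = n - i by omega]
  ring

end CatalanTriangle

lemma integral_eq_zero_of_odd {f : ℝ → ℝ} (hf : ∀ x, f (-x) = -f x) (a : ℝ) :
    ∫ x in -a..a, f x = 0 := by
  have h := integral_comp_neg (a := -a) (b := a) f
  simp only [hf, intervalIntegral.integral_neg, neg_neg] at h
  linarith

lemma hasDerivAt_sqrt_sq_sub_sq {r x : ℝ} (hx : x ^ 2 < r ^ 2) :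
    HasDerivAt (fun y => √(r ^ 2 - y ^ 2)) (-x / √(r ^ 2 - x ^ 2)) x := by
  have h := ((hasDerivAt_pow 2 x).const_sub (r ^ 2)).sqrt (by linarith)
  convert h using 1
  field_simp
  ring

lemma integral_sqrt_sq_sub_sq {r : ℝ} (hr : 0 < r) :
    ∫ x in -r..r, √(r ^ 2 - x ^ 2) = π * r ^ 2 / 2 := by
  have h := integral_comp_mul_left (fun x => √(r ^ 2 - x ^ 2)) (a := -1) (b := 1) hr.ne'
  have hscale : ∀ y : ℝ, √(r ^ 2 - (r * y) ^ 2) = r * √(1 - y ^ 2) := fun y => by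
    rw [show r ^ 2 - (r * y) ^ 2 = r ^ 2 * (1 - y ^ 2) by ring, sqrt_mul (by positivity),
      sqrt_sq hr.le]
  simp only [hscale, mul_neg, mul_one, intervalIntegral.integral_const_mul,
    integral_sqrt_one_sub_sq, smul_eq_mul] at h
  rw [eq_inv_mul_iff_mul_eq₀ hr.ne'] at h
  linear_combination -h

lemma integral_pow_mul_sqrt_sq_sub_sq_succ {r : ℝ} (hr : 0 ≤ r) (i : ℕ) :
    (2 * i + 4) * ∫ x in -r..r, x ^ (2 * i + 2) * √(r ^ 2 - x ^ 2) =
      (2 * i + 1) * r ^ 2 * ∫ x in -r..r, x ^ (2 * i) * √(r ^ 2 - x ^ 2) := by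
  set F : ℝ → ℝ := fun x => x ^ (2 * i + 1) * ((r ^ 2 - x ^ 2) * √(r ^ 2 - x ^ 2))
  have hderiv : ∀ x ∈ Set.Ioo (-r) r, HasDerivAt F
      ((2 * i + 1) * r ^ 2 * (x ^ (2 * i) * √(r ^ 2 - x ^ 2))
        - (2 * i + 4) * (x ^ (2 * i + 2) * √(r ^ 2 - x ^ 2))) x := by
    intro x hx
    have hx2 : x ^ 2 < r ^ 2 := sq_lt_sq' hx.1 hx.2
    have h : HasDerivAt F _ x := (hasDerivAt_pow (2 * i + 1) x).mul
      (((hasDerivAt_pow 2 x).const_sub (r ^ 2)).mul (hasDerivAt_sqrt_sq_sub_sq hx2))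
    refine h.congr_deriv ?_
    have hs : 0 < √(r ^ 2 - x ^ 2) := sqrt_pos.2 (sub_pos.2 hx2)
    set s := √(r ^ 2 - x ^ 2)
    have hss : r ^ 2 - x ^ 2 = s ^ 2 := (sq_sqrt (by linarith)).symm
    rw [hss, show r ^ 2 = s ^ 2 + x ^ 2 by linarith]
    field_simp
    push_cast
    ring
  have hint : ∀ j : ℕ, IntervalIntegrable (fun x => x ^ j * √(r ^ 2 - x ^ 2)) volume (-r) r :=
    fun j => Continuous.intervalIntegrable (by fun_prop) _ _
  have hFTC := integral_eq_sub_of_hasDerivAt_of_le (by linarith) (by fun_prop) hderiv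
    (((hint _).const_mul _).sub ((hint _).const_mul _))
  rw [integral_sub ((hint _).const_mul _) ((hint _).const_mul _),
    intervalIntegral.integral_const_mul, intervalIntegral.integral_const_mul] at hFTC
  simp only [F, neg_sq, sub_self, zero_mul, mul_zero] at hFTC
  linarith

theorem integral_pow_mul_sqrt_sq_sub_sq {r : ℝ} (hr : 0 < r) (i : ℕ) :
    ∫ x in -r..r, x ^ (2 * i) * √(r ^ 2 - x ^ 2) = 2 * π * catalan i * (r / 2) ^ (2 * i + 2) := by
  induction i with
  | zero =>
    simp only [mul_zero, pow_zero, one_mul, catalan_zero, integral_sqrt_sq_sub_sq hr]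
    ring
  | succ i ih =>
    have hrec := integral_pow_mul_sqrt_sq_sub_sq_succ hr.le i
    have hcat : ((i : ℝ) + 2) * catalan (i + 1) = 2 * (2 * i + 1) * catalan i := by
      exact_mod_cast succ_succ_mul_catalan_succ i
    rw [ih] at hrec
    rw [show 2 * (i + 1) = 2 * i + 2 by ring, pow_add _ (2 * i + 2) 2]
    apply mul_left_cancel₀ (show (2 * (i : ℝ) + 4) ≠ 0 by positivity)
    rw [hrec]
    linear_combination (-4 * π * (r / 2) ^ (2 * i + 2) * (r / 2) ^ 2) * hcat

lemma hasDerivAt_arcsin_div {r x : ℝ} (hr : 0 < r) (hx : x ^ 2 < r ^ 2) :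
    HasDerivAt (fun y => arcsin (y / r)) (1 / √(r ^ 2 - x ^ 2)) x := by
  have habs : |x / r| < 1 := by
    rw [abs_div, abs_of_pos hr, div_lt_one hr]; exact abs_lt_of_sq_lt_sq hx hr.le
  have h := (hasDerivAt_arcsin (abs_lt.1 habs).1.ne' (abs_lt.1 habs).2.ne).comp x
    ((hasDerivAt_id' x).div_const r)
  refine h.congr_deriv ?_
  have hs : √(1 - (x / r) ^ 2) = √(r ^ 2 - x ^ 2) / r := by
    rw [show 1 - (x / r) ^ 2 = (r ^ 2 - x ^ 2) / r ^ 2 by field_simp, sqrt_div' _ (by positivity),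
      sqrt_sq hr.le]
  rw [hs]
  field_simp

lemma hasDerivAt_arcsin_mul_div_mul_sqrt {r b v x : ℝ} (hr : 0 < r) (hv : 0 < v)
    (hrbv : v ^ 2 = r ^ 2 + b ^ 2) (hx : x ^ 2 < r ^ 2) :
    HasDerivAt (fun y => arcsin (b * y / (r * √(v ^ 2 - y ^ 2))))
      (b * v / ((v ^ 2 - x ^ 2) * √(r ^ 2 - x ^ 2))) x := by
  have hxv : x ^ 2 < v ^ 2 := by nlinarith
  have hs : 0 < √(r ^ 2 - x ^ 2) := sqrt_pos.2 (by linarith)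
  have ht : 0 < √(v ^ 2 - x ^ 2) := sqrt_pos.2 (by linarith)
  set s := √(r ^ 2 - x ^ 2)
  set t := √(v ^ 2 - x ^ 2) with ht_def
  have hss : s ^ 2 = r ^ 2 - x ^ 2 := sq_sqrt (by linarith)
  have htt : t ^ 2 = v ^ 2 - x ^ 2 := sq_sqrt (by linarith)
  have hkey : 1 - (b * x / (r * t)) ^ 2 = (v * s / (r * t)) ^ 2 := by
    field_simp
    linear_combination r ^ 2 * htt - v ^ 2 * hss + x ^ 2 * hrbv
  have hu1 : (b * x / (r * t)) ^ 2 < 1 := by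
    have : 0 < (v * s / (r * t)) ^ 2 := by positivity
    linarith
  have hu := abs_lt.1 ((sq_lt_one_iff_abs_lt_one _).1 hu1)
  have hinner :
      HasDerivAt (fun y => b * y / (r * √(v ^ 2 - y ^ 2))) (b * v ^ 2 / (r * t ^ 3)) x := by
    have h := ((hasDerivAt_id' x).const_mul b).div ((hasDerivAt_sqrt_sq_sub_sq hxv).const_mul r)
      (by positivity)
    refine h.congr_deriv ?_
    rw [← ht_def]
    field_simp
    linear_combination b * htt
  refine ((hasDerivAt_arcsin hu.1.ne' hu.2.ne).comp x hinner).congr_deriv ?_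
  rw [hkey, sqrt_sq (by positivity), ← htt]
  field_simp

/-- For `v² = r² + b²` with `0 ≤ b`, a primitive of `√(r² - y²) / (v² - y²)` on `[-r, r]`,
continuous up to the endpoints. -/
noncomputable def sqrtRatioPrimitive (r b v y : ℝ) : ℝ :=
  arcsin (y / r) - b / v * arcsin (b * y / (r * √(v ^ 2 - y ^ 2)))

lemma hasDerivAt_sqrtRatioPrimitive {r b v x : ℝ} (hr : 0 < r) (hv : 0 < v)
    (hrbv : v ^ 2 = r ^ 2 + b ^ 2) (hx : x ^ 2 < r ^ 2) :
    HasDerivAt (sqrtRatioPrimitive r b v) (√(r ^ 2 - x ^ 2) / (v ^ 2 - x ^ 2)) x := by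
  refine ((hasDerivAt_arcsin_div hr hx).sub
    ((hasDerivAt_arcsin_mul_div_mul_sqrt hr hv hrbv hx).const_mul (b / v))).congr_deriv ?_
  have hs : 0 < √(r ^ 2 - x ^ 2) := sqrt_pos.2 (by linarith)
  have hxv : 0 < v ^ 2 - x ^ 2 := by nlinarith
  have hss : √(r ^ 2 - x ^ 2) ^ 2 = r ^ 2 - x ^ 2 := sq_sqrt (by linarith)
  field_simp
  linear_combination hrbv - hss

lemma continuousOn_sqrtRatioPrimitive {r b v : ℝ} (hr : 0 < r) (hb : 0 ≤ b)
    (hrbv : v ^ 2 = r ^ 2 + b ^ 2) : ContinuousOn (sqrtRatioPrimitive r b v) (Set.Icc (-r) r) := by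
  have harcsin : Continuous fun y => arcsin (y / r) := by fun_prop
  rcases hb.eq_or_lt with rfl | hb
  · have h0 : sqrtRatioPrimitive r 0 v = fun y => arcsin (y / r) := by
      funext y; simp [sqrtRatioPrimitive]
    exact h0 ▸ harcsin.continuousOn
  have hden : ∀ y ∈ Set.Icc (-r) r, r * √(v ^ 2 - y ^ 2) ≠ 0 := fun y hy => by
    have : y ^ 2 ≤ r ^ 2 := sq_le_sq' hy.1 hy.2
    have : 0 < v ^ 2 - y ^ 2 := by nlinarith
    positivity
  exact harcsin.continuousOn.sub (continuousOn_const.mul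
    (continuous_arcsin.comp_continuousOn (ContinuousOn.div (by fun_prop) (by fun_prop) hden)))

lemma sqrtRatioPrimitive_neg (r b v y : ℝ) :
    sqrtRatioPrimitive r b v (-y) = -sqrtRatioPrimitive r b v y := by
  simp only [sqrtRatioPrimitive, neg_div, neg_sq, mul_neg, arcsin_neg]
  ring

lemma sqrtRatioPrimitive_self {r b v : ℝ} (hr : 0 < r) (hb : 0 ≤ b)
    (hrbv : v ^ 2 = r ^ 2 + b ^ 2) : sqrtRatioPrimitive r b v r = π / 2 * (1 - b / v) := by
  have hsqrt : √(v ^ 2 - r ^ 2) = b := by rw [show v ^ 2 - r ^ 2 = b ^ 2 by linarith, sqrt_sq hb]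
  rcases hb.eq_or_lt with rfl | hb
  · simp [sqrtRatioPrimitive, hr.ne']
  · rw [sqrtRatioPrimitive, hsqrt, div_self hr.ne', mul_comm b r, div_self (by positivity),
      arcsin_one]
    ring

theorem intervalIntegrable_sqrt_sq_sub_sq_div_sq_sub_sq {r b v : ℝ} (hr : 0 < r) (hb : 0 ≤ b)
    (hv : 0 < v) (hrbv : v ^ 2 = r ^ 2 + b ^ 2) :
    IntervalIntegrable (fun x => √(r ^ 2 - x ^ 2) / (v ^ 2 - x ^ 2)) volume (-r) r := by
  have hle : -r ≤ r := by linarith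
  refine intervalIntegrable_deriv_of_nonneg (g := sqrtRatioPrimitive r b v) ?_ ?_ ?_
  · rw [Set.uIcc_of_le hle]; exact continuousOn_sqrtRatioPrimitive hr hb hrbv
  · rw [min_eq_left hle, max_eq_right hle]
    exact fun x hx => hasDerivAt_sqrtRatioPrimitive hr hv hrbv (sq_lt_sq' hx.1 hx.2)
  · rw [min_eq_left hle, max_eq_right hle]
    intro x hx
    have : x ^ 2 < r ^ 2 := sq_lt_sq' hx.1 hx.2
    have : 0 < v ^ 2 - x ^ 2 := by nlinarith
    positivity

theorem integral_sqrt_sq_sub_sq_div_sq_sub_sq {r b v : ℝ} (hr : 0 < r) (hb : 0 ≤ b)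
    (hv : 0 < v) (hrbv : v ^ 2 = r ^ 2 + b ^ 2) :
    ∫ x in -r..r, √(r ^ 2 - x ^ 2) / (v ^ 2 - x ^ 2) = π * (1 - b / v) := by
  rw [integral_eq_sub_of_hasDerivAt_of_le (by linarith)
    (continuousOn_sqrtRatioPrimitive hr hb hrbv)
    (fun x hx => hasDerivAt_sqrtRatioPrimitive hr hv hrbv (sq_lt_sq' hx.1 hx.2))
    (intervalIntegrable_sqrt_sq_sub_sq_div_sq_sub_sq hr hb hv hrbv), sqrtRatioPrimitive_neg,
    sqrtRatioPrimitive_self hr hb hrbv]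
  ring

-- The `if` of `kestenMcKay` is dropped: off the support, `√` of a negative number is `0`.
noncomputable def kestenMcKayDensity (v x : ℝ) : ℝ :=
  v * √(4 * (v - 1) - x ^ 2) / (2 * π * (v ^ 2 - x ^ 2))

lemma kestenMcKay_eq_withDensity (v : ℝ) :
    kestenMcKay v = volume.withDensity fun x => ENNReal.ofReal (kestenMcKayDensity v x) := by
  unfold kestenMcKay kestenMcKayDensity
  congr with x
  split_ifs with h
  · rfl
  · rw [sqrt_eq_zero'.2 (by linarith), mul_zero, zero_div]

lemma kestenMcKayDensity_nonneg {v : ℝ} (hv : 0 ≤ v) (x : ℝ) : 0 ≤ kestenMcKayDensity v x := by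
  rcases le_or_gt (4 * (v - 1)) (x ^ 2) with h | h
  · simp [kestenMcKayDensity, sqrt_eq_zero'.2 (sub_nonpos.2 h)]
  · have : 0 ≤ v ^ 2 - x ^ 2 := by nlinarith [sq_nonneg (v - 2)]
    unfold kestenMcKayDensity
    positivity

lemma integral_kestenMcKay {v : ℝ} (hv : 0 ≤ v) (f : ℝ → ℝ) :
    ∫ x, f x ∂kestenMcKay v = ∫ x, kestenMcKayDensity v x * f x := by
  rw [kestenMcKay_eq_withDensity, integral_withDensity_eq_integral_toReal_smul
    (by unfold kestenMcKayDensity; fun_prop) (ae_of_all _ fun _ => ENNReal.ofReal_lt_top)]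
  simp only [ENNReal.toReal_ofReal (kestenMcKayDensity_nonneg hv _), smul_eq_mul]

/-- At `x² = v²` the division is by zero, but then `r² - x² ≤ 0` and both sides vanish. -/
lemma sq_sub_sq_mul_sqrt_div_sq_sub_sq {r v : ℝ} (hrv : r ^ 2 ≤ v ^ 2) (x : ℝ) :
    (v ^ 2 - x ^ 2) * (√(r ^ 2 - x ^ 2) / (v ^ 2 - x ^ 2)) = √(r ^ 2 - x ^ 2) := by
  rcases eq_or_ne (v ^ 2 - x ^ 2) 0 with h | h
  · rw [h, sqrt_eq_zero'.2 (by linarith), zero_mul]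
  · field_simp

lemma integral_kestenMcKay_eq_intervalIntegral {v r : ℝ} (hv : 0 ≤ v) (hr : 0 ≤ r)
    (hrv : r ^ 2 = 4 * (v - 1)) (f : ℝ → ℝ) :
    ∫ x, f x ∂kestenMcKay v =
      v / (2 * π) * ∫ x in -r..r, f x * (√(r ^ 2 - x ^ 2) / (v ^ 2 - x ^ 2)) := by
  have hsupp : ∀ x ∉ Set.Ioc (-r) r, kestenMcKayDensity v x * f x = 0 := fun x hx => by
    have : r ^ 2 ≤ x ^ 2 := by
      rw [Set.mem_Ioc, not_and_or, not_lt, not_le] at hx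
      rcases hx with hx | hx <;> nlinarith
    simp [kestenMcKayDensity, sqrt_eq_zero'.2 (show 4 * (v - 1) - x ^ 2 ≤ 0 by linarith)]
  rw [integral_kestenMcKay hv, ← setIntegral_eq_integral_of_forall_compl_eq_zero hsupp,
    ← integral_of_le (by linarith), ← intervalIntegral.integral_const_mul]
  congr with x
  rw [kestenMcKayDensity, ← hrv]
  field_simp

lemma two_mul_sqrt_sub_one_sq {v : ℝ} (hv : 1 ≤ v) : (2 * √(v - 1)) ^ 2 = 4 * (v - 1) := by
  rw [mul_pow, sq_sqrt (by linarith)]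
  norm_num

theorem integral_pow_kestenMcKay_of_odd {v : ℝ} (hv : 1 ≤ v) {k : ℕ} (hk : Odd k) :
    ∫ x, x ^ k ∂kestenMcKay v = 0 := by
  rw [integral_kestenMcKay_eq_intervalIntegral (by linarith) (by positivity)
    (two_mul_sqrt_sub_one_sq hv), integral_eq_zero_of_odd, mul_zero]
  intro x
  rw [hk.neg_pow, neg_sq, neg_mul]

theorem integral_kestenMcKay_one {v : ℝ} (hv : 2 ≤ v) : ∫ _, (1 : ℝ) ∂kestenMcKay v = 1 := by
  have hr := two_mul_sqrt_sub_one_sq (by linarith : 1 ≤ v)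
  rw [integral_kestenMcKay_eq_intervalIntegral (by linarith) (by positivity) hr]
  simp only [one_mul]
  rw [integral_sqrt_sq_sub_sq_div_sq_sub_sq (b := v - 2)
    (mul_pos two_pos (sqrt_pos.2 (by linarith))) (by linarith) (by linarith) (by rw [hr]; ring)]
  field_simp
  ring

theorem integral_pow_two_mul_add_two_kestenMcKay {v : ℝ} (hv : 1 < v) (n : ℕ) :
    ∫ x, x ^ (2 * n + 2) ∂kestenMcKay v =
      v ^ 2 * ∫ x, x ^ (2 * n) ∂kestenMcKay v - v * catalan n * (v - 1) ^ (n + 1) := by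
  set r := 2 * √(v - 1)
  have hr0 : 0 < r := mul_pos two_pos (sqrt_pos.2 (by linarith))
  have hr : r ^ 2 = 4 * (v - 1) := two_mul_sqrt_sub_one_sq hv.le
  have hrv : v ^ 2 = r ^ 2 + |v - 2| ^ 2 := by rw [hr, sq_abs]; ring
  have hw := intervalIntegrable_sqrt_sq_sub_sq_div_sq_sub_sq hr0 (abs_nonneg _) (by linarith) hrv
  have hint : ∀ j : ℕ, IntervalIntegrable (fun x => x ^ j * (√(r ^ 2 - x ^ 2) / (v ^ 2 - x ^ 2)))
      volume (-r) r := fun j => hw.continuousOn_mul (by fun_prop)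
  have hsplit : ∀ x : ℝ, x ^ (2 * n + 2) * (√(r ^ 2 - x ^ 2) / (v ^ 2 - x ^ 2)) =
      v ^ 2 * (x ^ (2 * n) * (√(r ^ 2 - x ^ 2) / (v ^ 2 - x ^ 2)))
        - x ^ (2 * n) * √(r ^ 2 - x ^ 2) := fun x => by
    linear_combination (-x ^ (2 * n)) *
      sq_sub_sq_mul_sqrt_div_sq_sub_sq (r := r) (v := v) (by nlinarith) x
  simp only [integral_kestenMcKay_eq_intervalIntegral (by linarith) hr0.le hr, hsplit]
  rw [intervalIntegral.integral_sub ((hint _).const_mul _)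
      (Continuous.intervalIntegrable (by fun_prop) _ _), intervalIntegral.integral_const_mul,
    integral_pow_mul_sqrt_sq_sub_sq hr0,
    show 2 * n + 2 = 2 * (n + 1) by ring, pow_mul, div_pow, hr]
  field_simp
  ring

theorem integral_pow_two_mul_add_two_kestenMcKay_eq_binaryForm {v : ℝ} (hv : 2 ≤ v) (n : ℕ) :
    ∫ x, x ^ (2 * n + 2) ∂kestenMcKay v = v * binaryForm (catalanTriangle n) n v (v - 1) := by
  induction n with
  | zero =>
    rw [integral_pow_two_mul_add_two_kestenMcKay (by linarith) 0]
    simp only [mul_zero, pow_zero, integral_kestenMcKay_one hv]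
    simp [binaryForm, catalanTriangle_zero_right]
    ring
  | succ n ih =>
    have hrec := sub_mul_binaryForm_catalanTriangle_succ n v (v - 1)
    rw [sub_sub_cancel, one_mul] at hrec
    rw [integral_pow_two_mul_add_two_kestenMcKay (by linarith),
      show 2 * (n + 1) = 2 * n + 2 by ring, ih, hrec]
    ring

/-- **Kesten–McKay moments.** For `v ≥ 2` and `k ≥ 1`, the `k`-th moment of
the Kesten–McKay distribution is `Σ_{j=1}^{k/2} C(k/2-1, k/2-j) v^j (v-1)^{k/2-j}` when `k`
is even, and `0` when `k` is odd. -/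
theorem stmt4 (v : ℝ) (hv : 2 ≤ v) (k : ℕ) (hk : 0 < k) :
    ∫ x, x ^ k ∂(kestenMcKay v) =
      if Even k then
        ∑ j ∈ Finset.Icc 1 (k / 2),
          catalanTriangle (k / 2 - 1) (k / 2 - j) * v ^ j * (v - 1) ^ (k / 2 - j)
      else 0 := by
  rcases Nat.even_or_odd k with ⟨n, rfl⟩ | hodd
  · obtain ⟨m, rfl⟩ : ∃ m, n = m + 1 := Nat.exists_eq_succ_of_ne_zero (by omega)
    rw [if_pos ⟨_, rfl⟩, show (m + 1 + (m + 1)) / 2 = m + 1 by omega,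
      show m + 1 + (m + 1) = 2 * m + 2 by ring,
      integral_pow_two_mul_add_two_kestenMcKay_eq_binaryForm hv, mul_binaryForm_eq_sum_Icc,
      Nat.add_sub_cancel]
  · rw [if_neg (Nat.not_even_iff_odd.2 hodd), integral_pow_kestenMcKay_of_odd (by linarith) hodd]
end

section
/- Fix p ∈ (0,1) and k ∈ ℕ. Let S be an n×n symmetric conference matrix, let F be a real n×n matrix with FᵀF = I + (1/√n) S, let 𝓘 ⊆ [n] be a random subset in which each element of [n] is included independently with probability p, let P := diag(1_{1∈𝓘}, ..., 1_{n∈𝓘}), and let X be the principal submatrix of S indexed by 𝓘. Then there exists a constant c(p,k) > 0, depending only on p and k, such that Var( tr( ((1/(p√n)) X)^k ) ) ≤ c(p,k) · ( max_{j ∈ [k]} Var( ‖FP‖_{S^{2j}}^{2j} ) + n^{1/2} ), where ‖FP‖_{S^{2j}}^{2j} = tr( (P Fᵀ F P)^j ) is the 2j-th power of the Schatten (2j)-norm of FP. -/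
open MeasureTheory ProbabilityTheory Filter Finset
open scoped ENNReal

/-!
With `P` the coordinate projection onto `𝓘` and `y := P Fᵀ F P = P + n^{-1/2} P S P`, the
matrices `y` and `P` commute, `y P = y`, and `P S P` is `X` padded by zeros. Hence
`n^{-k/2} tr (X ^ k) = tr ((y - P) ^ k) = tr ((y - 1) ^ k P)`, and the binomial theorem writes
`tr ((X / (p √n)) ^ k)` as a combination `∑ⱼ (-1)^(k-j) C(k,j) p^(-k) tr (y ^ max j 1)` whose
coefficients depend only on `p` and `k` (the `j = 0` term is `tr P = tr y`, as `S` has zero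
diagonal). The variance of a sum of `k + 1` random variables is at most `k + 1` times the sum of
their variances, and `∑ⱼ C(k,j)² = C(2k,k)`, so `c(p,k) = (k + 1) C(2k,k) / p^(2k)` works.
-/

open Matrix

instance (n : ℕ) (p : ℝ≥0∞) (hp : p ≤ 1) : IsProbabilityMeasure (bernoulliPi n p hp) := by
  unfold bernoulliPi; infer_instance

section Variance

variable {Ω ι : Type*} {mΩ : MeasurableSpace Ω} {μ : Measure Ω} [IsFiniteMeasure μ]

lemma two_mul_covariance_le {X Y : Ω → ℝ} (hX : MemLp X 2 μ) (hY : MemLp Y 2 μ) :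
    2 * cov[X, Y; μ] ≤ Var[X; μ] + Var[Y; μ] := by
  have h := variance_nonneg (X - Y) μ
  rw [variance_sub hX hY] at h
  linarith

lemma variance_sum_le_card_mul_sum {s : Finset ι} {X : ι → Ω → ℝ}
    (hX : ∀ i ∈ s, MemLp (X i) 2 μ) :
    Var[fun ω ↦ ∑ i ∈ s, X i ω; μ] ≤ #s * ∑ i ∈ s, Var[X i; μ] := by
  rw [variance_fun_sum' hX]
  calc ∑ i ∈ s, ∑ j ∈ s, cov[X i, X j; μ]
      ≤ ∑ i ∈ s, ∑ j ∈ s, (Var[X i; μ] + Var[X j; μ]) / 2 := by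
        gcongr with i hi j hj
        linarith [two_mul_covariance_le (hX i hi) (hX j hj)]
    _ = #s * ∑ i ∈ s, Var[X i; μ] := by
        simp only [add_div, sum_add_distrib, sum_const, nsmul_eq_mul, ← mul_sum, ← sum_div]
        ring

end Variance

lemma sub_pow_eq_sub_one_pow_mul {R : Type*} [Ring R] {e y : R} (he : IsIdempotentElem e)
    (hey : e * y = y) (hye : y * e = y) {k : ℕ} (hk : k ≠ 0) :
    (y - e) ^ k = (y - 1) ^ k * e := by
  have hsub : y - e = (y - 1) * e := by rw [sub_mul, hye, one_mul]
  have hcomm : Commute (y - 1) e := by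
    simp only [Commute, SemiconjBy, sub_mul, mul_sub, hye, hey, one_mul, mul_one]
  rw [hsub, hcomm.mul_pow, he.pow_eq hk]

section Trace

variable {ι m R : Type*} [Fintype ι] [Fintype m] [DecidableEq m] [CommSemiring R]

lemma trace_pow_mul_of_mul_eq {e y : Matrix m m R} (hye : y * e = y) (htr : trace y = trace e)
    (j : ℕ) : trace (y ^ j * e) = trace (y ^ max j 1) := by
  cases j with
  | zero => simp [htr]
  | succ j => rw [pow_succ, Matrix.mul_assoc, hye, Nat.max_eq_left (by omega), pow_succ]

lemma trace_conj_pow [DecidableEq ι] (A : Matrix ι m R) (B : Matrix m ι R) (hAB : A * B = 1)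
    (X : Matrix ι ι R) {k : ℕ} (hk : k ≠ 0) : trace ((B * X * A) ^ k) = trace (X ^ k) := by
  have hpow : ∀ j : ℕ, (B * X * A) ^ (j + 1) = B * X ^ (j + 1) * A := by
    intro j
    induction j with
    | zero => simp
    | succ j ih =>
      rw [pow_succ, ih, pow_succ _ (j + 1)]
      simp only [Matrix.mul_assoc]
      rw [← Matrix.mul_assoc A B, hAB, Matrix.one_mul]
  obtain ⟨j, rfl⟩ := Nat.exists_eq_succ_of_ne_zero hk
  rw [hpow, trace_mul_comm, ← Matrix.mul_assoc, hAB, Matrix.one_mul]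

end Trace

lemma trace_sub_pow_eq_sum {m R : Type*} [Fintype m] [DecidableEq m] [CommRing R]
    {e y : Matrix m m R} (he : IsIdempotentElem e) (hey : e * y = y)
    (hye : y * e = y) (htr : trace y = trace e) {k : ℕ} (hk : k ≠ 0) :
    trace ((y - e) ^ k) =
      ∑ j ∈ range (k + 1), (-1) ^ (k - j) * k.choose j * trace (y ^ max j 1) := by
  rw [sub_pow_eq_sub_one_pow_mul he hey hye hk, sub_eq_add_neg, (Commute.neg_one_right y).add_pow,
    sum_mul, trace_sum]
  refine sum_congr rfl fun j _ => ?_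
  have hcoef : (-1) ^ (k - j) * (k.choose j : Matrix m m R) =
      (((-1) ^ (k - j) * k.choose j : ℤ) : Matrix m m R) := by
    push_cast; rfl
  rw [← trace_pow_mul_of_mul_eq hye htr, Matrix.mul_assoc (y ^ j), hcoef, ← Int.cast_comm,
    ← zsmul_eq_mul, Matrix.smul_mul, trace_smul, zsmul_eq_mul]
  push_cast
  ring

section Selection

variable {n : ℕ} (ω : Fin n → Bool)

def coordProj : Matrix (Fin n) (Fin n) ℝ := diagonal fun i => if ω i then 1 else 0

def selectionMatrix : Matrix {i // ω i = true} (Fin n) ℝ :=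
  (1 : Matrix (Fin n) (Fin n) ℝ).submatrix Subtype.val id

lemma selectionMatrix_mul_transpose : selectionMatrix ω * (selectionMatrix ω)ᵀ = 1 := by
  ext a b
  simp [selectionMatrix, mul_apply, one_apply, Subtype.val_inj]

lemma transpose_mul_selectionMatrix :
    (selectionMatrix ω)ᵀ * selectionMatrix ω = coordProj ω := by
  ext a b
  simp only [selectionMatrix, coordProj, mul_apply, transpose_apply, submatrix_apply, one_apply,
    id_eq, diagonal_apply]
  rw [← Finset.sum_subtype (univ.filter fun i => ω i = true) (by simp)
    (fun x => (if x = a then 1 else 0) * if x = b then (1 : ℝ) else 0)]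
  by_cases hab : a = b
  · simp [hab]
  · simp [hab, Ne.symm hab]

lemma selectionMatrix_mul_mul_transpose (S : Matrix (Fin n) (Fin n) ℝ) :
    selectionMatrix ω * S * (selectionMatrix ω)ᵀ = subMat S ω := by
  ext a b
  simp [selectionMatrix, subMat, mul_apply, one_apply]

lemma isIdempotentElem_coordProj : IsIdempotentElem (coordProj ω) := by
  rw [IsIdempotentElem, ← transpose_mul_selectionMatrix, Matrix.mul_assoc,
    ← Matrix.mul_assoc _ _ (selectionMatrix ω), selectionMatrix_mul_transpose, Matrix.one_mul]

lemma trace_subMat_pow (S : Matrix (Fin n) (Fin n) ℝ) {k : ℕ} (hk : k ≠ 0) :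
    trace (subMat S ω ^ k) = trace ((coordProj ω * S * coordProj ω) ^ k) := by
  rw [← trace_conj_pow _ _ (selectionMatrix_mul_transpose ω) _ hk,
    ← selectionMatrix_mul_mul_transpose, ← transpose_mul_selectionMatrix]
  simp only [Matrix.mul_assoc]

lemma trace_coordProj_mul_mul_coordProj {S : Matrix (Fin n) (Fin n) ℝ} (hS : ∀ i, S i i = 0) :
    trace (coordProj ω * S * coordProj ω) = 0 := by
  simp [coordProj, trace, mul_diagonal, diagonal_mul, hS]

lemma trace_smul_subMat_pow {S : Matrix (Fin n) (Fin n) ℝ} (hS : ∀ i, S i i = 0) (a : ℝ)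
    {k : ℕ} (hk : k ≠ 0) :
    trace ((a • subMat S ω) ^ k) = ∑ j ∈ range (k + 1), (-1 : ℝ) ^ (k - j) * k.choose j *
      trace ((coordProj ω * (1 + a • S) * coordProj ω) ^ max j 1) := by
  set P := coordProj ω
  have hP : IsIdempotentElem P := isIdempotentElem_coordProj ω
  have hy : P * (1 + a • S) * P = P + a • (P * S * P) := by
    rw [Matrix.mul_add, Matrix.add_mul, Matrix.mul_one, hP.eq, Matrix.mul_smul, Matrix.smul_mul]
  have hPx : P * (P * S * P) = P * S * P := by
    rw [← Matrix.mul_assoc, ← Matrix.mul_assoc, hP.eq]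
  have hxP : P * S * P * P = P * S * P := by rw [Matrix.mul_assoc, hP.eq]
  have htr : trace (P + a • (P * S * P)) = trace P := by
    rw [trace_add, trace_smul, trace_coordProj_mul_mul_coordProj ω hS, smul_zero, add_zero]
  rw [hy, ← trace_sub_pow_eq_sum hP (by rw [Matrix.mul_add, hP.eq, Matrix.mul_smul, hPx])
    (by rw [Matrix.add_mul, hP.eq, Matrix.smul_mul, hxP]) htr hk, add_sub_cancel_left,
    smul_pow, smul_pow, trace_smul, trace_smul, trace_subMat_pow ω S hk]

end Selection

/-- The variance of `tr((1/(p√n) X)^k)` is controlled, up to a constant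
`c(p,k)` and an additive `√n`, by the maximal variance of the Schatten-norm powers
`‖FP‖_{S^{2j}}^{2j} = tr((P Fᵀ F P)^j)` for `j ∈ [k]`. -/
theorem stmt10 (p : ℝ) (hp0 : 0 < p) (hp1 : p < 1) (k : ℕ) (hk : 0 < k) :
    ∃ c > (0 : ℝ), ∀ (n : ℕ) (S F : Matrix (Fin n) (Fin n) ℝ),
      IsConferenceMatrix S →
      F.transpose * F = 1 + (Real.sqrt n)⁻¹ • S →
      let μ := bernoulliPi n (ENNReal.ofReal p) (ENNReal.ofReal_le_one.mpr hp1.le)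
      let P := fun ω : Fin n → Bool =>
        (Matrix.diagonal fun i => if ω i then (1 : ℝ) else 0)
      variance (fun ω => Matrix.trace (((1 / (p * Real.sqrt n)) • subMat S ω) ^ k)) μ ≤
        c * ((Finset.Icc 1 k).sup' (Finset.nonempty_Icc.mpr hk)
            (fun j => variance
              (fun ω => Matrix.trace ((P ω * (F.transpose * F) * P ω) ^ j)) μ)
          + Real.sqrt n) := by
  set d : ℕ → ℝ := fun j => p⁻¹ ^ k * ((-1) ^ (k - j) * k.choose j) with hd
  have hd_sq : ∑ j ∈ range (k + 1), d j ^ 2 = (2 * k).choose k / p ^ (2 * k) := by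
    rw [← Nat.sum_range_choose_sq, Nat.cast_sum, sum_div]
    refine sum_congr rfl fun j _ => ?_
    have hsign : ((-1 : ℝ) ^ (k - j)) ^ 2 = 1 := by
      rw [← pow_mul, mul_comm, pow_mul, neg_one_sq, one_pow]
    rw [hd, mul_pow, mul_pow, hsign, one_mul, Nat.cast_pow, pow_mul, inv_pow, inv_pow,
      div_eq_inv_mul, pow_right_comm]
  refine ⟨(k + 1) * ((2 * k).choose k / p ^ (2 * k)),
    mul_pos (by positivity) (div_pos (mod_cast Nat.choose_pos (by omega)) (by positivity)), ?_⟩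
  intro n S F hS hF μ P
  set T : ℕ → (Fin n → Bool) → ℝ := fun j ω => trace ((P ω * (Fᵀ * F) * P ω) ^ j)
  set V := (Icc 1 k).sup' (nonempty_Icc.mpr hk) fun j => Var[T j; μ]
  have hX : (fun ω => trace (((1 / (p * √n)) • subMat S ω) ^ k)) =
      fun ω => ∑ j ∈ range (k + 1), d j * T (max j 1) ω := by
    funext ω
    rw [one_div, mul_inv, mul_smul, smul_pow, trace_smul, trace_smul_subMat_pow ω hS.2.1 _ hk.ne',
      smul_eq_mul, mul_sum]
    exact sum_congr rfl fun j _ => by simp only [hd, T, hF, coordProj]; ring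
  have hVar : ∀ j ∈ range (k + 1), Var[fun ω => d j * T (max j 1) ω; μ] ≤ d j ^ 2 * V := by
    intro j hj
    rw [variance_const_mul]
    gcongr
    exact le_sup' (fun j => Var[T j; μ]) (by simp at hj ⊢; omega)
  calc Var[fun ω => trace (((1 / (p * √n)) • subMat S ω) ^ k); μ]
      ≤ #(range (k + 1)) * ∑ j ∈ range (k + 1), Var[fun ω => d j * T (max j 1) ω; μ] := by
        rw [hX]; exact variance_sum_le_card_mul_sum fun _ _ => MemLp.of_discrete
    _ ≤ (k + 1) * ∑ j ∈ range (k + 1), d j ^ 2 * V := by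
        rw [card_range, Nat.cast_add_one]; gcongr with j hj; exact hVar j hj
    _ = (k + 1) * ((2 * k).choose k / p ^ (2 * k)) * V := by rw [← sum_mul, hd_sq, mul_assoc]
    _ ≤ (k + 1) * ((2 * k).choose k / p ^ (2 * k)) * (V + √n) := by
        gcongr; exact le_add_of_nonneg_right (Real.sqrt_nonneg n)
end
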